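/- arXiv:2104.14263 — 6 statements merged into one kernel-verified Lean document; each statement's English description precedes it below -/
import Mathlib

section
/- Let P be a poset, W a topological space, and {X_p | p ∈ P} a semi-trim P-partition of W with X = ⋃_{p∈P} X_p. Then for every p ∈ P, the intersection of the closure of X_p with X equals ⋃_{q ≤ p} X_q. -/
open Set

variable {P W : Type*} [PartialOrder P] [TopologicalSpace W]

/-- The type of a subset `Y` with respect to the family `X`. -/
def ptype (X : P → Set W) (Y : Set W) : Set P :=
  {p | (Y ∩ X p).Nonempty}

/-- `A` is a `p`-trim set: an open set whose type is exactly `{q | p ≤ q}`. -/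
def IsTrimSet (X : P → Set W) (p : P) (A : Set W) : Prop :=
  IsOpen A ∧ ptype X A = Ici p

/-- `P̂`: the set of labels `p` for which a `p`-trim set exists. -/
def trimHat (X : P → Set W) : Set P :=
  {p | ∃ A, IsTrimSet X p A}

/-- A `P`-partition: a pairwise disjoint family of nonempty subsets. -/
structure IsPPartition (X : P → Set W) : Prop where
  nonempty : ∀ p, (X p).Nonempty
  pairwise_disjoint : Pairwise fun p q => Disjoint (X p) (X q)

/-- A semi-trim `P`-partition. -/
structure IsSemiTrim (X : P → Set W) extends IsPPartition X : Prop where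
  nhds_base : ∀ w : W, ∀ U ∈ nhds w, ∃ p A, IsTrimSet X p A ∧ w ∈ A ∧ A ⊆ U
  trim_dense : ∀ A : Set W, IsOpen A → ∀ p ∈ ptype X A ∩ trimHat X,
    ∃ B ⊆ A, IsTrimSet X p B
  label_sup : ∀ p, ∀ x ∈ X p, IsLUB {q | ∃ A, IsTrimSet X q A ∧ x ∈ A} p
  full : ∀ p : P, ∀ w : W,
    (∀ U ∈ nhds w, ∃ A, IsTrimSet X p A ∧ w ∈ A ∧ A ⊆ U) → w ∈ X p

/-! A trim neighbourhood `A` of `x` meets `X p` exactly when `t(A) ≤ p`, and trim sets form a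
neighbourhood base. Hence `x ∈ closure (X p)` says precisely that `p` bounds the labels `t(A)` of
the trim neighbourhoods of `x`; for `x ∈ X q` their supremum is `q`, so this means `q ≤ p`. -/

open Filter Topology

variable {X : P → Set W}

theorem IsTrimSet.inter_nonempty_iff {r : P} {A : Set W} (hA : IsTrimSet X r A) (p : P) :
    (A ∩ X p).Nonempty ↔ r ≤ p :=
  Set.ext_iff.mp hA.2 p

namespace IsSemiTrim

theorem hasBasis_nhds (h : IsSemiTrim X) (x : W) :
    (𝓝 x).HasBasis (fun A => (∃ r, IsTrimSet X r A) ∧ x ∈ A) id := by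
  refine ⟨fun U => ⟨fun hU => ?_, fun ⟨A, ⟨⟨r, hA⟩, hxA⟩, hAU⟩ => ?_⟩⟩
  · obtain ⟨r, A, hA, hxA, hAU⟩ := h.nhds_base x U hU
    exact ⟨A, ⟨⟨r, hA⟩, hxA⟩, hAU⟩
  · exact mem_of_superset (hA.1.mem_nhds hxA) hAU

theorem mem_closure_iff_mem_upperBounds (h : IsSemiTrim X) {x : W} {p : P} :
    x ∈ closure (X p) ↔ p ∈ upperBounds {r | ∃ A, IsTrimSet X r A ∧ x ∈ A} := by
  rw [mem_closure_iff_nhds_basis' (h.hasBasis_nhds x)]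
  constructor
  · rintro hcl r ⟨A, hA, hxA⟩
    exact (hA.inter_nonempty_iff p).1 (hcl A ⟨⟨r, hA⟩, hxA⟩)
  · rintro hp A ⟨⟨r, hA⟩, hxA⟩
    exact (hA.inter_nonempty_iff p).2 (hp ⟨A, hA, hxA⟩)

theorem mem_closure_iff_le (h : IsSemiTrim X) {x : W} {p q : P} (hx : x ∈ X q) :
    x ∈ closure (X p) ↔ q ≤ p := by
  rw [h.mem_closure_iff_mem_upperBounds, isLUB_le_iff (h.label_sup q x hx)]

end IsSemiTrim

/-- For a semi-trim `P`-partition of `W`, the intersection of the closure of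
`X p` with `X = ⋃ q, X q` equals `⋃ q ≤ p, X q`. -/
theorem closure_inter_eq_biUnion_le (X : P → Set W) (h : IsSemiTrim X) (p : P) :
    closure (X p) ∩ (⋃ q, X q) = ⋃ q ≤ p, X q := by
  ext x
  simp only [mem_inter_iff, mem_iUnion, exists_prop]
  constructor
  · rintro ⟨hcl, q, hxq⟩
    exact ⟨q, (h.mem_closure_iff_le hxq).1 hcl, hxq⟩
  · rintro ⟨q, hqp, hxq⟩
    exact ⟨(h.mem_closure_iff_le hxq).2 hqp, q, hxq⟩
end

section
/- Let P be a poset satisfying the ascending chain condition and containing no infinite antichains, and let W be a topological space. Then every good P-partition of W is a complete trim P-partition of W. -/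
/-! For a complete good partition the up-set `U p = ⋃ q ≥ p, X q` is `p`-trim. Its type is `Ici p`
because the pieces are disjoint and nonempty. Its complement is the union of the `X q` with
`q ∉ Ici p`; by the ACC every such `q` lies below a maximal one `m`, and `X q ⊆ closure (X m)` by
goodness, so the complement is the union of the closures of the maximal elements of `(Ici p)ᶜ`.
These form an antichain, hence are finitely many, and `U p` is open.

Fullness: if `w ∈ X r` has a base of `p`-trim neighbourhoods, then one of them, `B`, lies inside
`U r`, so `Ici p ⊆ Ici r`; and `r ∈ ptype X B = Ici p`. Hence `p = r`. -/

open Set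

variable {P W : Type*} [PartialOrder P] [TopologicalSpace W]

open Topology

lemma wellFoundedGT_of_forall_not_strictMono {α : Type*} [Preorder α]
    (h : ∀ f : ℕ → α, ¬ StrictMono f) : WellFoundedGT α :=
  ⟨RelEmbedding.wellFounded_iff_isEmpty.2 ⟨fun f => h f fun _ _ hab => f.map_rel_iff.2 hab⟩⟩

lemma finite_setOf_maximal
    (hAC : ∀ S : Set P, (S.Pairwise fun a b => ¬ a ≤ b ∧ ¬ b ≤ a) → S.Finite)
    (Q : P → Prop) : {m | Maximal Q m}.Finite :=
  hAC _ fun _ ha _ hb hab =>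
    ⟨setOfPred_maximal_antichain Q ha hb hab, setOfPred_maximal_antichain Q hb ha hab.symm⟩

lemma ptype_mono {ι α : Type*} (X : ι → Set α) {A B : Set α} (h : A ⊆ B) :
    ptype X A ⊆ ptype X B :=
  fun _ ⟨x, hxA, hx⟩ => ⟨x, h hxA, hx⟩

namespace IsPPartition

variable {ι α : Type*} {X : ι → Set α}

lemma eq_of_mem (hX : IsPPartition X) {q r : ι} {x : α} (hq : x ∈ X q) (hr : x ∈ X r) :
    q = r := by
  by_contra hqr
  exact disjoint_left.1 (hX.pairwise_disjoint hqr) hq hr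

lemma mem_biUnion_iff (hX : IsPPartition X) {r : ι} {x : α} (hx : x ∈ X r) (S : Set ι) :
    x ∈ ⋃ q ∈ S, X q ↔ r ∈ S := by
  simp only [mem_iUnion₂, exists_prop]
  exact ⟨fun ⟨q, hq, hxq⟩ => hX.eq_of_mem hxq hx ▸ hq, fun hr => ⟨r, hr, hx⟩⟩

lemma ptype_biUnion (hX : IsPPartition X) (S : Set ι) : ptype X (⋃ q ∈ S, X q) = S := by
  ext q
  refine ⟨fun ⟨x, hxS, hxq⟩ => (hX.mem_biUnion_iff hxq S).1 hxS, fun hq => ?_⟩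
  obtain ⟨x, hx⟩ := hX.nonempty q
  exact ⟨x, (hX.mem_biUnion_iff hx S).2 hq, hx⟩

lemma compl_biUnion (hX : IsPPartition X) (hcomplete : (⋃ i, X i) = univ) (S : Set ι) :
    (⋃ q ∈ S, X q)ᶜ = ⋃ q ∈ Sᶜ, X q := by
  ext x
  obtain ⟨r, hr⟩ := mem_iUnion.1 (hcomplete ▸ mem_univ x)
  rw [mem_compl_iff, hX.mem_biUnion_iff hr, hX.mem_biUnion_iff hr, mem_compl_iff]

end IsPPartition

lemma isClosed_biUnion_of_isLowerSet [WellFoundedGT P] {X : P → Set W}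
    (hgood : ∀ p, closure (X p) = ⋃ q ≤ p, X q) {S : Set P} (hS : IsLowerSet S)
    (hfin : {m | Maximal (· ∈ S) m}.Finite) : IsClosed (⋃ q ∈ S, X q) := by
  have hunion : ⋃ q ∈ S, X q = ⋃ m ∈ {m | Maximal (· ∈ S) m}, closure (X m) := by
    simp only [hgood]
    ext x
    simp only [mem_iUnion, exists_prop]
    constructor
    · rintro ⟨q, hq, hx⟩
      obtain ⟨m, hqm, hm⟩ := exists_maximal_ge_of_wellFoundedGT (· ∈ S) q hq
      exact ⟨m, hm, q, hqm, hx⟩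
    · rintro ⟨m, hm, q, hqm, hx⟩
      exact ⟨q, hS hqm hm.prop, hx⟩
  rw [hunion]
  exact hfin.isClosed_biUnion fun _ _ => isClosed_closure

lemma isTrimSet_biUnion_Ici [WellFoundedGT P] (hfin : ∀ Q : P → Prop, {m | Maximal Q m}.Finite)
    {X : P → Set W} (hX : IsPPartition X) (hcomplete : (⋃ p, X p) = univ)
    (hgood : ∀ p, closure (X p) = ⋃ q ≤ p, X q) (p : P) :
    IsTrimSet X p (⋃ q ∈ Ici p, X q) := by
  refine ⟨?_, hX.ptype_biUnion _⟩
  rw [← isClosed_compl_iff, hX.compl_biUnion hcomplete]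
  exact isClosed_biUnion_of_isLowerSet hgood (isUpperSet_Ici p).compl (hfin _)

lemma mem_of_forall_nhds_isTrimSet {X : P → Set W} {p r : P} {w : W} {A : Set W}
    (hwr : w ∈ X r) (hA : IsTrimSet X r A) (hwA : w ∈ A)
    (hw : ∀ U ∈ 𝓝 w, ∃ B, IsTrimSet X p B ∧ w ∈ B ∧ B ⊆ U) : w ∈ X p := by
  obtain ⟨B, hB, hwB, hBA⟩ := hw A (hA.1.mem_nhds hwA)
  have hpr : p ≤ r := by
    have hr : r ∈ ptype X B := ⟨w, hwB, hwr⟩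
    rwa [hB.2] at hr
  have hrp : r ≤ p := by
    have hsub := ptype_mono X hBA
    rwa [hB.2, hA.2, Ici_subset_Ici] at hsub
  rwa [le_antisymm hpr hrp]

/-- If `P` satisfies the ACC and has no infinite antichains, then every good
`P`-partition of a topological space `W` is a complete trim `P`-partition: every point of the
(complete) partition is clean, and the partition is full. -/
theorem good_isCompleteTrim_of_acc_of_noInfiniteAntichain
    (hACC : ∀ f : ℕ → P, ¬ StrictMono f)
    (hAC : ∀ S : Set P, (S.Pairwise fun a b => ¬ a ≤ b ∧ ¬ b ≤ a) → S.Finite)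
    (X : P → Set W) (hpart : IsPPartition X)
    (hcomplete : (⋃ p, X p) = univ)
    (hgood : ∀ p, closure (X p) = ⋃ q ≤ p, X q) :
    (⋃ p, X p) = univ ∧
    (∀ p, ∀ x ∈ X p, ∃ A, IsTrimSet X p A ∧ x ∈ A) ∧
    (∀ p : P, ∀ w : W,
      (∀ U ∈ nhds w, ∃ A, IsTrimSet X p A ∧ w ∈ A ∧ A ⊆ U) → w ∈ X p) := by
  have := wellFoundedGT_of_forall_not_strictMono hACC
  have htrim := isTrimSet_biUnion_Ici (finite_setOf_maximal hAC) hpart hcomplete hgood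
  have hmem {p : P} {x : W} (hx : x ∈ X p) : x ∈ ⋃ q ∈ Ici p, X q :=
    mem_biUnion (mem_Ici.2 le_rfl) hx
  refine ⟨hcomplete, fun p x hx => ⟨_, htrim p, hmem hx⟩, fun p w hw => ?_⟩
  obtain ⟨r, hwr⟩ := mem_iUnion.1 (hcomplete ▸ mem_univ w)
  exact mem_of_forall_nhds_isTrimSet hwr (htrim r) (hmem hwr) hw
end

section
/- Let P be a poset satisfying the ascending chain condition and W a topological space. Then every semi-trim P-partition of W is a complete trim P-partition of W. -/
open Set

variable {P W : Type*} [PartialOrder P] [TopologicalSpace W]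

/-!
By the ACC, among the labels of trim neighbourhoods of a point `w` there is a maximal one, `p`,
say with `p`-trim neighbourhood `A₀`. Any neighbourhood `U` of `w` contains a trim neighbourhood
`C ⊆ U ∩ A₀` of `w`; since `C ⊆ A₀` its label is at least `p`, hence equal to `p`. So `w` has a
neighbourhood base of `p`-trim sets, and fullness puts `w` in `X p`. Thus the partition covers
`W`, and every point is clean for its own label because the pieces are disjoint.
-/

theorem wellFoundedGT_of_forall_not_strictMono_s2 (hACC : ∀ f : ℕ → P, ¬ StrictMono f) :
    WellFoundedGT P :=
  ⟨RelEmbedding.wellFounded_iff_isEmpty.2 ⟨fun f ↦ hACC f fun _ _ hab ↦ f.map_rel_iff.2 hab⟩⟩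

omit [PartialOrder P] [TopologicalSpace W] in
theorem ptype_mono_s2 (X : P → Set W) {A B : Set W} (hAB : A ⊆ B) : ptype X A ⊆ ptype X B :=
  fun _ ⟨x, hxA, hxX⟩ ↦ ⟨x, hAB hxA, hxX⟩

theorem IsTrimSet.le_of_subset {X : P → Set W} {p q : P} {A B : Set W}
    (hA : IsTrimSet X p A) (hB : IsTrimSet X q B) (hAB : A ⊆ B) : q ≤ p := by
  have hsub := ptype_mono_s2 X hAB
  rw [hA.2, hB.2] at hsub
  exact hsub (mem_Ici.2 le_rfl)

def trimLabels (X : P → Set W) (w : W) : Set P :=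
  {q | ∃ A, IsTrimSet X q A ∧ w ∈ A}

omit [PartialOrder P] [TopologicalSpace W] in
theorem IsPPartition.eq_of_mem_s2 {X : P → Set W} (h : IsPPartition X) {p q : P} {x : W}
    (hp : x ∈ X p) (hq : x ∈ X q) : p = q := by
  by_contra hne
  exact (h.pairwise_disjoint hne).le_bot ⟨hp, hq⟩

namespace IsSemiTrim

variable {X : P → Set W}

theorem trimLabels_nonempty (h : IsSemiTrim X) (w : W) : (trimLabels X w).Nonempty := by
  obtain ⟨p, A, hA, hwA, -⟩ := h.nhds_base w univ Filter.univ_mem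
  exact ⟨p, A, hA, hwA⟩

theorem mem_of_maximal_trimLabels (h : IsSemiTrim X) {w : W} {p : P}
    (hp : Maximal (· ∈ trimLabels X w) p) : w ∈ X p := by
  obtain ⟨A₀, hA₀, hwA₀⟩ := hp.prop
  refine h.full p w fun U hU ↦ ?_
  obtain ⟨r, C, hC, hwC, hCU⟩ :=
    h.nhds_base w (U ∩ A₀) (Filter.inter_mem hU (hA₀.1.mem_nhds hwA₀))
  have hpr : p ≤ r := hC.le_of_subset hA₀ fun _ hx ↦ (hCU hx).2
  obtain rfl : p = r := le_antisymm hpr (hp.2 ⟨C, hC, hwC⟩ hpr)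
  exact ⟨C, hC, hwC, fun _ hx ↦ (hCU hx).1⟩

theorem exists_mem_trimLabels [WellFoundedGT P] (h : IsSemiTrim X) (w : W) :
    ∃ p, w ∈ X p ∧ p ∈ trimLabels X w := by
  obtain ⟨p, hp⟩ := WellFoundedGT.exists_maximal ‹_› _ (h.trimLabels_nonempty w)
  exact ⟨p, h.mem_of_maximal_trimLabels hp, hp.prop⟩

end IsSemiTrim

/-- If `P` satisfies the ACC, then every semi-trim `P`-partition of a
topological space `W` is a complete trim `P`-partition: the partition covers `W` and every
point of the partition is clean. -/
theorem semiTrim_isCompleteTrim_of_acc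
    (hACC : ∀ f : ℕ → P, ¬ StrictMono f)
    (X : P → Set W) (h : IsSemiTrim X) :
    (⋃ p, X p) = univ ∧
    (∀ p, ∀ x ∈ X p, ∃ A, IsTrimSet X p A ∧ x ∈ A) := by
  have := wellFoundedGT_of_forall_not_strictMono_s2 hACC
  refine ⟨eq_univ_of_forall fun w ↦ ?_, fun p x hx ↦ ?_⟩
  · obtain ⟨p, hwp, -⟩ := h.exists_mem_trimLabels w
    exact mem_iUnion.2 ⟨p, hwp⟩
  · obtain ⟨q, hxq, hq⟩ := h.exists_mem_trimLabels x
    rwa [h.eq_of_mem_s2 hx hxq]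
end

section
/- Let P be a poset, W a T1 topological space, and {X_p | p ∈ P} a semi-trim P-partition of W. Then a point w ∈ W is an isolated point of W if and only if there is a maximal element p of P such that w ∈ X_p and w is an isolated point of the subspace X_p. -/
open Set

variable {P W : Type*} [PartialOrder P] [TopologicalSpace W]

/-
A trim neighbourhood `B ⊆ U` of `w` is `q`-trim with `q ≤ p`. On the open set `B \ {w}` the
label `p` does not occur, so by `trim_dense` neither does `q`; hence `w ∈ X q`, i.e. `q = p`.
As `p` is maximal, `B` has type `{p}` and `B \ {w}` has empty type, which forces it to be
empty because every point has trim neighbourhoods. Conversely, a trim neighbourhood of `w`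
inside the open set `{w}` is `{w}` itself, whose type `Ici p` contains a single label.
-/

section Ptype

variable {ι α : Type*} (X : ι → Set α)

theorem ptype_mono_s4 {Y Z : Set α} (hYZ : Y ⊆ Z) : ptype X Y ⊆ ptype X Z :=
  fun _ ⟨x, hxY, hx⟩ => ⟨x, hYZ hxY, hx⟩

theorem ptype_union (Y Z : Set α) : ptype X (Y ∪ Z) = ptype X Y ∪ ptype X Z := by
  ext p
  simp only [ptype, mem_ofPred_eq, mem_union, union_inter_distrib_right, union_nonempty]

theorem mem_ptype_singleton {w : α} {i : ι} : i ∈ ptype X {w} ↔ w ∈ X i := by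
  simp [ptype]

theorem IsPPartition.eq_of_mem_s4 {X : ι → Set α} (h : IsPPartition X) {i j : ι} {w : α}
    (hi : w ∈ X i) (hj : w ∈ X j) : i = j := by
  by_contra hij
  exact (h.pairwise_disjoint hij).le_bot ⟨hi, hj⟩

end Ptype

theorem IsTrimSet.mem_ptype_self {X : P → Set W} {p : P} {A : Set W} (hA : IsTrimSet X p A) :
    p ∈ ptype X A :=
  hA.2 ▸ self_mem_Ici

namespace IsSemiTrim

variable {X : P → Set W}

theorem exists_trimSet_subset (h : IsSemiTrim X) {w : W} {U : Set W} (hU : IsOpen U)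
    (hwU : w ∈ U) : ∃ p A, IsTrimSet X p A ∧ w ∈ A ∧ A ⊆ U :=
  h.nhds_base w U (hU.mem_nhds hwU)

theorem eq_empty_of_ptype_eq_empty (h : IsSemiTrim X) {V : Set W} (hV : IsOpen V)
    (hVt : ptype X V = ∅) : V = ∅ := by
  refine eq_empty_of_forall_notMem fun x hxV => ?_
  obtain ⟨r, C, hC, -, hCV⟩ := h.exists_trimSet_subset hV hxV
  simpa [hVt] using ptype_mono_s4 X hCV hC.mem_ptype_self

theorem mem_ptype_of_le (h : IsSemiTrim X) {A : Set W} (hA : IsOpen A) {q p : P}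
    (hq : q ∈ ptype X A) (hqt : q ∈ trimHat X) (hqp : q ≤ p) : p ∈ ptype X A := by
  obtain ⟨B, hBA, hB⟩ := h.trim_dense A hA q ⟨hq, hqt⟩
  exact ptype_mono_s4 X hBA (by rw [hB.2]; exact hqp)

theorem exists_isMax_of_isOpen_singleton (h : IsSemiTrim X) {w : W}
    (hw : IsOpen ({w} : Set W)) : ∃ p, IsMax p ∧ w ∈ X p := by
  obtain ⟨p, A, hA, hwA, hAw⟩ := h.exists_trimSet_subset hw rfl
  obtain rfl : A = {w} := subset_antisymm hAw (singleton_subset_iff.2 hwA)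
  have hlabel : ∀ q, w ∈ X q ↔ p ≤ q := fun q => by
    rw [← mem_ptype_singleton X, hA.2, mem_Ici]
  have hwp : w ∈ X p := (hlabel p).2 le_rfl
  exact ⟨p, fun q hpq => (h.eq_of_mem_s4 ((hlabel q).2 hpq) hwp).le, hwp⟩

theorem isOpen_singleton_of_isMax [T1Space W] (h : IsSemiTrim X) {p : P} (hp : IsMax p)
    {w : W} (hwp : w ∈ X p) {U : Set W} (hU : IsOpen U) (hUp : U ∩ X p = {w}) :
    IsOpen ({w} : Set W) := by
  have hwU : w ∈ U := (hUp.ge rfl).1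
  obtain ⟨q, B, hB, hwB, hBU⟩ := h.exists_trimSet_subset hU hwU
  set V := B \ {w}
  have hVo : IsOpen V := hB.1.sdiff isClosed_singleton
  have hpV : p ∉ ptype X V := fun ⟨x, ⟨hxB, hxw⟩, hxp⟩ => hxw (hUp.le ⟨hBU hxB, hxp⟩)
  have hBtype : ptype X B = Ici q := hB.2
  have hqp : q ≤ p := by
    simpa [hBtype] using ptype_mono_s4 X (singleton_subset_iff.2 hwB) ((mem_ptype_singleton X).2 hwp)
  have hBsplit : ptype X B = ptype X V ∪ ptype X {w} := by
    rw [← ptype_union, sdiff_union_of_subset (singleton_subset_iff.2 hwB)]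
  have hqV : q ∉ ptype X V := fun hqV => hpV (h.mem_ptype_of_le hVo hqV ⟨B, hB⟩ hqp)
  have hwq : w ∈ X q :=
    (mem_ptype_singleton X).1 ((hBsplit ▸ hB.mem_ptype_self).resolve_left hqV)
  obtain rfl : q = p := h.eq_of_mem_s4 hwq hwp
  have hVt : ptype X V = ∅ := by
    refine eq_empty_of_forall_notMem fun r hrV => hpV ?_
    have hr : r ∈ Ici q := hBtype ▸ ptype_mono_s4 X sdiff_subset hrV
    rw [hp.Ici_eq, mem_singleton_iff] at hr
    rwa [hr] at hrV
  rw [← subset_antisymm (sdiff_eq_empty.1 (h.eq_empty_of_ptype_eq_empty hVo hVt))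
    (singleton_subset_iff.2 hwB)]
  exact hB.1

end IsSemiTrim

/-- For a semi-trim `P`-partition of a T1 space `W`, a point `w` is isolated
in `W` iff there is a maximal `p ∈ P` with `w ∈ X p` and `w` isolated in the subspace `X p`. -/
theorem isolated_iff_isolated_in_max [T1Space W]
    (X : P → Set W) (h : IsSemiTrim X) (w : W) :
    IsOpen ({w} : Set W) ↔
      ∃ p : P, IsMax p ∧ w ∈ X p ∧ ∃ U : Set W, IsOpen U ∧ U ∩ X p = {w} := by
  constructor
  · intro hw
    obtain ⟨p, hp, hwp⟩ := h.exists_isMax_of_isOpen_singleton hw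
    exact ⟨p, hp, hwp, {w}, hw, inter_eq_left.2 (singleton_subset_iff.2 hwp)⟩
  · rintro ⟨p, hp, hwp, U, hU, hUp⟩
    exact h.isOpen_singleton_of_isMax hp hwp hU hUp
end

section
/- Let P be a poset, W a topological space admitting a good P-partition {X_p | p ∈ P}, and A a compact closed subset of W. Then every descending sequence p_1 ≥ p_2 ≥ p_3 ≥ ⋯ of elements of T(A) has a lower bound in T(A): there exists q ∈ T(A) with q ≤ p_i for all i. -/
open Set

variable {P W : Type*} [PartialOrder P] [TopologicalSpace W]

theorem IsCompact.inter_iInter_nonempty_of_antitone {X ι : Type*} [TopologicalSpace X]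
    [Preorder ι] [IsDirected ι (· ≤ ·)] [Nonempty ι] {s : Set X} (hs : IsCompact s)
    {t : ι → Set X} (ht : Antitone t) (htc : ∀ i, IsClosed (t i))
    (hst : ∀ i, (s ∩ t i).Nonempty) : (s ∩ ⋂ i, t i).Nonempty :=
  hs.inter_iInter_nonempty t htc fun u => by
    obtain ⟨N, hN⟩ := u.exists_le
    exact (hst N).mono (inter_subset_inter_right s (subset_iInter₂ fun i hi => ht (hN i hi)))

section GoodPartition

variable {X : P → Set W}

theorem monotone_closure_of_good (hgood : ∀ p, closure (X p) = ⋃ q ≤ p, X q) :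
    Monotone fun p => closure (X p) := by
  intro p p' hpp'
  simp only [hgood]
  exact biUnion_mono (fun _ hq => le_trans hq hpp') fun _ _ => subset_rfl

theorem le_of_mem_closure_of_good (hdisj : Pairwise fun p q => Disjoint (X p) (X q))
    (hgood : ∀ p, closure (X p) = ⋃ q ≤ p, X q) {p q : P} {w : W} (hwq : w ∈ X q)
    (hwp : w ∈ closure (X p)) : q ≤ p := by
  rw [hgood, mem_iUnion₂] at hwp
  obtain ⟨q', hq'p, hwq'⟩ := hwp
  obtain rfl : q' = q := by_contra fun hne => (hdisj hne).ne_of_mem hwq' hwq rfl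
  exact hq'p

end GoodPartition

theorem descending_chain_lowerBound_of_good_general
    (X : P → Set W) (hpart : IsPPartition X) (hcomplete : (⋃ p, X p) = univ)
    (hgood : ∀ p, closure (X p) = ⋃ q ≤ p, X q)
    (A : Set W) (hAcpt : IsCompact A)
    (p : ℕ → P) (hp : Antitone p) (hpT : ∀ i, p i ∈ ptype X A) :
    ∃ q ∈ ptype X A, ∀ i, q ≤ p i := by
  obtain ⟨w, hwA, hwcl⟩ : (A ∩ ⋂ i, closure (X (p i))).Nonempty :=
    hAcpt.inter_iInter_nonempty_of_antitone ((monotone_closure_of_good hgood).comp_antitone hp)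
      (fun _ => isClosed_closure) fun i => (hpT i).mono (inter_subset_inter_right A subset_closure)
  obtain ⟨q, hwq⟩ := iUnion_eq_univ_iff.mp hcomplete w
  exact ⟨q, ⟨w, hwA, hwq⟩, fun i =>
    le_of_mem_closure_of_good hpart.pairwise_disjoint hgood hwq (mem_iInter.mp hwcl i)⟩

/-- If `W` admits a good `P`-partition and `A ⊆ W` is compact and closed,
then every descending sequence in `T(A)` has a lower bound in `T(A)`. -/
theorem descending_chain_lowerBound_of_good
    (X : P → Set W) (hpart : IsPPartition X) (hcomplete : (⋃ p, X p) = univ)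
    (hgood : ∀ p, closure (X p) = ⋃ q ≤ p, X q)
    (A : Set W) (hAcpt : IsCompact A) (hAcl : IsClosed A)
    (p : ℕ → P) (hp : Antitone p) (hpT : ∀ i, p i ∈ ptype X A) :
    ∃ q ∈ ptype X A, ∀ i, q ≤ p i :=
  descending_chain_lowerBound_of_good_general X hpart hcomplete hgood A hAcpt p hp hpT
end

section
/- There is a partition {X_r | r ∈ [0,1]} of the Cantor set W (the family being pairwise disjoint, nonempty, with union W) such that for every r ∈ [0,1] the closure of X_r equals ⋃_{s ≤ r} X_s, and moreover X_0 is homeomorphic to the Cantor set. -/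
/-!
Give every index `n` a weight `q n ∈ [0,1]` so that the weights at indices `≥ N` approach every
`r ∈ [0,1]` from below, for every `N`, while infinitely many weights vanish, and send a point
`x` of the Cantor set `ℕ → Bool` to the supremum `g x` of the weights of its support. The sets
`{g ≤ r}` are closed, since `g` is a supremum of locally constant functions, and the fibre
`{g = r}` is dense in `{g ≤ r}`: changing `x` beyond `N` to the indicator of `{q ≤ r}` moves it to
`{g = r}`. So the fibres `X r = {g = r}` form the required partition, and `X 0` consists of the
points supported on the infinite set `{q = 0}`, a copy of the Cantor set.
-/

open Set Filter Topology

section SupWeight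

variable {ι α : Type*} [CompleteLinearOrder α]

def supWeight (q : ι → α) (x : ι → Bool) : α :=
  ⨆ (i) (_ : x i = true), q i

theorem supWeight_le_iff {q : ι → α} {x : ι → Bool} {r : α} :
    supWeight q x ≤ r ↔ ∀ i, x i = true → q i ≤ r :=
  iSup₂_le_iff

theorem supWeight_eq_bot_iff {q : ι → α} {x : ι → Bool} :
    supWeight q x = ⊥ ↔ ∀ i, x i = true → q i = ⊥ :=
  iSup₂_eq_bot

theorem isClosed_supWeight_preimage_Iic (q : ι → α) (r : α) :
    IsClosed (supWeight q ⁻¹' Iic r) := by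
  have h : supWeight q ⁻¹' Iic r = ⋂ i, (fun x => x i) ⁻¹' {b | b = true → q i ≤ r} := by
    ext x
    simp [supWeight_le_iff]
  rw [h]
  exact isClosed_iInter fun i => (isClosed_discrete _).preimage (continuous_apply i)

theorem supWeight_patch_eq {q : ℕ → α} {x : ℕ → Bool} {r : α} (hx : supWeight q x ≤ r) (N : ℕ)
    (hq : ∀ c < r, ∃ n, N ≤ n ∧ c < q n ∧ q n ≤ r) :
    supWeight q (fun n => if n < N then x n else decide (q n ≤ r)) = r := by
  refine le_antisymm (supWeight_le_iff.2 fun n hn => ?_) (le_of_forall_lt fun c hc => ?_)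
  · split_ifs at hn
    · exact supWeight_le_iff.1 hx n hn
    · exact of_decide_eq_true hn
  · obtain ⟨n, hNn, hcn, hnr⟩ := hq c hc
    refine hcn.trans_le (le_iSup₂_of_le n ?_ le_rfl)
    simp [hnr, not_lt.2 hNn]

theorem closure_supWeight_preimage_singleton {q : ℕ → α} {r : α}
    (hq : ∀ N, ∀ c < r, ∃ n, N ≤ n ∧ c < q n ∧ q n ≤ r) :
    closure (supWeight q ⁻¹' {r}) = supWeight q ⁻¹' Iic r := by
  refine (closure_minimal (fun x hx => le_of_eq hx)
    (isClosed_supWeight_preimage_Iic q r)).antisymm fun x hx => ?_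
  have hlim : Tendsto (fun N n => if n < N then x n else decide (q n ≤ r)) atTop (𝓝 x) :=
    tendsto_pi_nhds.2 fun n => tendsto_const_nhds.congr'
      (eventually_atTop.2 ⟨n + 1, fun N hN => (if_pos (by omega)).symm⟩)
  exact mem_closure_of_tendsto hlim (Eventually.of_forall fun N => supWeight_patch_eq hx N (hq N))

open Classical in
noncomputable def supportedOnHomeomorph (S : Set ι) :
    {x : ι → Bool | ∀ i, x i = true → i ∈ S} ≃ₜ (S → Bool) where
  toFun x i := x.1 i
  invFun y := ⟨fun i => if h : i ∈ S then y ⟨i, h⟩ else false,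
    fun i hi => by_contra fun h => by simp [h] at hi⟩
  left_inv x := by
    ext i
    by_cases h : i ∈ S
    · simp [h]
    · simpa [h] using (Bool.eq_false_iff.2 (mt (x.2 i) h)).symm
  right_inv y := funext fun i => dif_pos i.2
  continuous_toFun := continuous_pi fun i => (continuous_apply i.1).comp continuous_subtype_val
  continuous_invFun := by
    refine (continuous_pi fun i => ?_).subtype_mk _
    by_cases h : i ∈ S
    · simpa [h] using continuous_apply (⟨i, h⟩ : S)
    · simpa [h] using continuous_const

theorem nonempty_homeomorph_supWeight_preimage_bot [Countable ι] {q : ι → α}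
    (hq : {i | q i = ⊥}.Infinite) : Nonempty (supWeight q ⁻¹' {⊥} ≃ₜ (ℕ → Bool)) := by
  have : Infinite {i | q i = ⊥} := hq.to_subtype
  obtain ⟨e⟩ := nonempty_equiv_of_countable (α := {i | q i = ⊥}) (β := ℕ)
  have hfiber : supWeight q ⁻¹' {⊥} = {x : ι → Bool | ∀ i, x i = true → i ∈ {i | q i = ⊥}} :=
    Set.ext fun _ => supWeight_eq_bot_iff
  exact ⟨(Homeomorph.setCongr hfiber).trans
    ((supportedOnHomeomorph _).trans (Homeomorph.piCongrLeft (Y := fun _ => Bool) e))⟩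

end SupWeight

/-- The rational coded by `n.unpair.1`, clamped to `[0,1]`; unpairing makes every value recur
along the indices `Nat.pair k N`, so it occurs beyond any bound. -/
noncomputable def ratWeight (n : ℕ) : Icc (0 : ℝ) 1 :=
  projIcc 0 1 zero_le_one ((Denumerable.eqv ℚ).symm n.unpair.1)

theorem ratWeight_pair (t : ℚ) (N : ℕ) :
    ratWeight (Nat.pair (Denumerable.eqv ℚ t) N) = projIcc 0 1 zero_le_one (t : ℝ) := by
  simp only [ratWeight, Nat.unpair_pair, Equiv.symm_apply_apply]

theorem exists_ratWeight_mem_Ioc {c r : Icc (0 : ℝ) 1} (h : c < r) (N : ℕ) :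
    ∃ n, N ≤ n ∧ c < ratWeight n ∧ ratWeight n ≤ r := by
  obtain ⟨t, hct, htr⟩ := exists_rat_btwn (Subtype.coe_lt_coe.2 h)
  refine ⟨Nat.pair (Denumerable.eqv ℚ t) N, Nat.right_le_pair _ _, ?_, ?_⟩
  · rw [ratWeight_pair, ← Subtype.coe_lt_coe, coe_projIcc]
    exact lt_max_of_lt_right (lt_min ((Subtype.coe_lt_coe.2 h).trans_le r.2.2) hct)
  · rw [ratWeight_pair, ← projIcc_val zero_le_one r]
    exact monotone_projIcc zero_le_one htr.le

theorem infinite_ratWeight_eq_bot : {n | ratWeight n = ⊥}.Infinite := by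
  refine infinite_of_forall_exists_gt fun N =>
    ⟨Nat.pair (Denumerable.eqv ℚ 0) (N + 1), ?_, Nat.lt_of_succ_le (Nat.right_le_pair _ _)⟩
  show ratWeight _ = ⊥
  rw [ratWeight_pair, Rat.cast_zero, projIcc_left]
  rfl

/-- There is a partition `{X r | r ∈ [0,1]}` of the Cantor set
(realised as `ℕ → Bool` with the product topology) such that
`closure (X r) = ⋃_{s ≤ r} X s` for every `r ∈ [0,1]`, and `X 0` is homeomorphic to the
Cantor set. -/
theorem cantor_partition_indexed_by_unitInterval :
    ∃ X : Icc (0 : ℝ) 1 → Set (ℕ → Bool),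
      (∀ r, (X r).Nonempty) ∧
      (Pairwise fun r s => Disjoint (X r) (X s)) ∧
      (⋃ r, X r) = univ ∧
      (∀ r, closure (X r) = ⋃ s ≤ r, X s) ∧
      Nonempty (↥(X ⟨0, by norm_num⟩) ≃ₜ (ℕ → Bool)) := by
  set g := supWeight ratWeight
  have hclosure : ∀ r, closure (g ⁻¹' {r}) = g ⁻¹' Iic r := fun r =>
    closure_supWeight_preimage_singleton fun N _ hc => exists_ratWeight_mem_Ioc hc N
  refine ⟨fun r => g ⁻¹' {r}, fun r => ?_, fun r s hrs => (disjoint_singleton.2 hrs).preimage g,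
    ?_, fun r => ?_, nonempty_homeomorph_supWeight_preimage_bot infinite_ratWeight_eq_bot⟩
  · refine closure_nonempty_iff.1 (hclosure r ▸ ⟨fun _ => false, ?_⟩)
    simp [g, supWeight_le_iff]
  · exact eq_univ_of_forall fun x => mem_iUnion.2 ⟨g x, rfl⟩
  · rw [hclosure]
    ext x
    simp only [mem_iUnion, mem_preimage, mem_singleton_iff, mem_Iic, exists_prop]
    exact ⟨fun hx => ⟨g x, hx, rfl⟩, fun ⟨s, hs, hx⟩ => hx ▸ hs⟩
end
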